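/- arXiv:1101.0066 — 2 statements merged into one kernel-verified Lean document; each statement's English description precedes it below -/
import Mathlib

section
/- Let n ≥ 3 and let I be a finite set of diagonals of the convex (n+3)-gon G_{n+3} with 4·|I| > n(n+2). Then the non-crossing graph G(I) has at most two connected components. -/
/-- A diagonal of the convex `N`-gon with vertices labelled `1, …, N` in cyclic order:
a pair `(i, j)` with `1 ≤ i`, `i + 2 ≤ j ≤ N`, excluding the edge `(1, N)`. -/
def IsDiag (N : ℕ) (d : ℕ × ℕ) : Prop :=
  1 ≤ d.1 ∧ d.1 + 2 ≤ d.2 ∧ d.2 ≤ N ∧ ¬(d.1 = 1 ∧ d.2 = N)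

instance (N : ℕ) (d : ℕ × ℕ) : Decidable (IsDiag N d) := by
  unfold IsDiag; infer_instance

/-- Two diagonals of a convex polygon cross (intersect at an interior point). -/
def Crosses (d e : ℕ × ℕ) : Prop :=
  (d.1 < e.1 ∧ e.1 < d.2 ∧ d.2 < e.2) ∨ (e.1 < d.1 ∧ d.1 < e.2 ∧ e.2 < d.2)

instance (d e : ℕ × ℕ) : Decidable (Crosses d e) := by
  unfold Crosses; infer_instance

/-- The finite set of all diagonals of the convex `N`-gon. -/
def Diags (N : ℕ) : Finset (ℕ × ℕ) :=
  (Finset.range (N + 1) ×ˢ Finset.range (N + 1)).filter (IsDiag N)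
/-- The non-crossing graph `G(I)` on a finite set `I` of diagonals: two distinct
diagonals are adjacent iff they do not cross. Its connected components correspond to
the connected components of the union `P_I` of the facets of the associahedron `Asⁿ`
indexed by `I`. -/
def ncGraph (I : Finset (ℕ × ℕ)) : SimpleGraph {x // x ∈ I} where
  Adj d e := d ≠ e ∧ ¬ Crosses d.1 e.1
  symm := by
    constructor
    rintro d e ⟨h1, h2⟩
    exact ⟨h1.symm, fun h => h2 (Or.symm h)⟩
  loopless := ⟨fun d h => h.1 rfl⟩

/-- `G(I)` has exactly two connected components, `I₁` and `I₂`: they partition `I`,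
are nonempty, and two diagonals of `I` are joined by a path in the non-crossing graph
iff they lie in the same part. -/
def TwoComponents (I I₁ I₂ : Finset (ℕ × ℕ)) : Prop :=
  I₁ ∪ I₂ = I ∧ Disjoint I₁ I₂ ∧ I₁.Nonempty ∧ I₂.Nonempty ∧
    ∀ (d : ℕ × ℕ) (hd : d ∈ I) (e : ℕ × ℕ) (he : e ∈ I),
      (ncGraph I).Reachable ⟨d, hd⟩ ⟨e, he⟩ ↔
        (d ∈ I₁ ∧ e ∈ I₁) ∨ (d ∈ I₂ ∧ e ∈ I₂)

/-! If `G(I)` had three components, split `I` into the component `A` of `a`, the component `B`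
of `b` and the rest `C`. Diagonals from different parts cross, so the endpoint sets of
`A`, `B`, `C` are disjoint, of sizes `v_A, v_B, v_C ≥ 2` with `v_A + v_B + v_C ≤ n + 3`. All
diagonals of `A` cross a fixed diagonal of `B`, so `A` is a bipartite graph on its endpoints and
`4|A| ≤ v_A²`. Hence `4|I| ≤ v_A² + v_B² + v_C² ≤ (n - 1)² + 8 ≤ n(n + 2)`. -/

open Finset

lemma Crosses.symm {d e : ℕ × ℕ} (h : Crosses d e) : Crosses e d :=
  Or.symm h

lemma Crosses.fst_lt_snd {d e : ℕ × ℕ} (h : Crosses d e) : d.1 < d.2 := by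
  unfold Crosses at h
  omega

def endpoints (F : Finset (ℕ × ℕ)) : Finset ℕ :=
  F.image Prod.fst ∪ F.image Prod.snd

lemma mem_endpoints {F : Finset (ℕ × ℕ)} {v : ℕ} :
    v ∈ endpoints F ↔ ∃ d ∈ F, d.1 = v ∨ d.2 = v := by
  simp only [endpoints, mem_union, mem_image]
  grind

lemma endpoints_union (F G : Finset (ℕ × ℕ)) :
    endpoints (F ∪ G) = endpoints F ∪ endpoints G := by
  ext v
  simp only [mem_endpoints, mem_union]
  grind

lemma two_le_card_endpoints {F : Finset (ℕ × ℕ)} {d : ℕ × ℕ} (hd : d ∈ F) (hlt : d.1 < d.2) :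
    2 ≤ #(endpoints F) :=
  one_lt_card.2 ⟨d.1, mem_endpoints.2 ⟨d, hd, .inl rfl⟩, d.2, mem_endpoints.2 ⟨d, hd, .inr rfl⟩,
    hlt.ne⟩

lemma endpoints_subset_Icc {N : ℕ} {F : Finset (ℕ × ℕ)} (hF : ∀ d ∈ F, IsDiag N d) :
    endpoints F ⊆ Icc 1 N := by
  intro v hv
  obtain ⟨d, hd, hv⟩ := mem_endpoints.1 hv
  have := hF d hd
  unfold IsDiag at this
  rw [mem_Icc]
  omega

lemma disjoint_endpoints {F G : Finset (ℕ × ℕ)} (h : ∀ x ∈ F, ∀ y ∈ G, Crosses x y) :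
    Disjoint (endpoints F) (endpoints G) := by
  rw [disjoint_left]
  intro v hvF hvG
  obtain ⟨x, hx, hxv⟩ := mem_endpoints.1 hvF
  obtain ⟨y, hy, hyv⟩ := mem_endpoints.1 hvG
  have := h x hx y hy
  unfold Crosses at this
  omega

lemma four_mul_card_le_sq_card_endpoints {F : Finset (ℕ × ℕ)} {d : ℕ × ℕ}
    (h : ∀ x ∈ F, Crosses x d) : 4 * #F ≤ #(endpoints F) ^ 2 := by
  set inside : ℕ → Prop := fun v => d.1 < v ∧ v < d.2
  set X := (endpoints F).filter inside
  set Y := (endpoints F).filter (¬ inside ·)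
  -- a diagonal crossing `d` has exactly one endpoint strictly inside `d`; list it first
  have hF : #F ≤ #X * #Y := by
    rw [← card_product]
    refine card_le_card_of_injOn (fun x => if inside x.1 then x else x.swap) ?_ ?_
    · intro x hx
      have hxd := h x hx
      have h1 : x.1 ∈ endpoints F := mem_endpoints.2 ⟨x, hx, .inl rfl⟩
      have h2 : x.2 ∈ endpoints F := mem_endpoints.2 ⟨x, hx, .inr rfl⟩
      unfold Crosses at hxd
      dsimp only
      split_ifs <;>
        simp only [coe_product, coe_filter, Set.mem_prod, Set.mem_ofPred_eq, Prod.fst_swap,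
          Prod.snd_swap, X, Y, inside, h1, h2, true_and, not_and, not_lt] <;> omega
    · intro x hx y hy hxy
      have hx' := (h x hx).fst_lt_snd
      have hy' := (h y hy).fst_lt_snd
      dsimp only at hxy
      split_ifs at hxy <;>
        simp only [Prod.ext_iff, Prod.fst_swap, Prod.snd_swap] at hxy ⊢ <;> omega
  calc 4 * #F ≤ 4 * #X * #Y := by rw [mul_assoc]; omega
    _ ≤ (#X + #Y) ^ 2 := four_mul_le_sq_add _ _
    _ = #(endpoints F) ^ 2 := by rw [card_filter_add_card_filter_not]

/-- For fixed `a + b + c`, the sum of squares is largest at the corner `(a + b + c - 4, 2, 2)`. -/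
lemma sq_add_sq_add_sq_le {a b c n : ℕ} (ha : 2 ≤ a) (hb : 2 ≤ b) (hc : 2 ≤ c)
    (h : a + b + c ≤ n + 3) : a ^ 2 + b ^ 2 + c ^ 2 ≤ n * (n + 2) := by
  nlinarith [Nat.mul_le_mul (Nat.sub_le_sub_right ha 2) (Nat.sub_le_sub_right hb 2)]

noncomputable def ncComponent (I : Finset (ℕ × ℕ)) (a : {x // x ∈ I}) : Finset (ℕ × ℕ) := by
  classical
  exact I.filter fun d => ∃ hd : d ∈ I, (ncGraph I).Reachable a ⟨d, hd⟩

lemma mem_ncComponent {I : Finset (ℕ × ℕ)} {a : {x // x ∈ I}} {d : ℕ × ℕ} :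
    d ∈ ncComponent I a ↔ ∃ hd : d ∈ I, (ncGraph I).Reachable a ⟨d, hd⟩ := by
  simp only [ncComponent, mem_filter]
  exact ⟨And.right, fun h => ⟨h.1, h⟩⟩

lemma val_mem_ncComponent {I : Finset (ℕ × ℕ)} {a d : {x // x ∈ I}} :
    d.1 ∈ ncComponent I a ↔ (ncGraph I).Reachable a d :=
  mem_ncComponent.trans ⟨fun ⟨_, h⟩ => h, fun h => ⟨d.2, h⟩⟩

lemma ncComponent_subset (I : Finset (ℕ × ℕ)) (a : {x // x ∈ I}) : ncComponent I a ⊆ I :=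
  fun _ hd => (mem_ncComponent.1 hd).1

lemma ncComponent_subset_sdiff {I : Finset (ℕ × ℕ)} {a b : {x // x ∈ I}}
    (h : ¬ (ncGraph I).Reachable a b) : ncComponent I b ⊆ I \ ncComponent I a := by
  intro d hd
  obtain ⟨hd, hbd⟩ := mem_ncComponent.1 hd
  exact mem_sdiff.2 ⟨hd, fun had => h ((val_mem_ncComponent.1 had).trans hbd.symm)⟩

lemma crosses_of_not_reachable {I : Finset (ℕ × ℕ)} {d e : {x // x ∈ I}}
    (h : ¬ (ncGraph I).Reachable d e) : Crosses d e := by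
  by_contra hde
  exact h (SimpleGraph.Adj.reachable ⟨fun hde' => h (hde' ▸ .rfl), hde⟩)

lemma crosses_of_mem_ncComponent_of_mem_sdiff {I : Finset (ℕ × ℕ)} {a : {x // x ∈ I}}
    {d e : ℕ × ℕ} (hd : d ∈ ncComponent I a) (he : e ∈ I \ ncComponent I a) : Crosses d e := by
  obtain ⟨hd, had⟩ := mem_ncComponent.1 hd
  obtain ⟨he, he'⟩ := mem_sdiff.1 he
  exact crosses_of_not_reachable (d := ⟨d, hd⟩) (e := ⟨e, he⟩)
    fun hde => he' (val_mem_ncComponent.2 (had.trans hde))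

theorem four_mul_card_le_of_pairwise_crossing {n : ℕ} {A B C : Finset (ℕ × ℕ)}
    (hdiag : ∀ d ∈ A ∪ B ∪ C, IsDiag (n + 3) d) (hA : A.Nonempty) (hB : B.Nonempty)
    (hC : C.Nonempty) (hAB : ∀ x ∈ A, ∀ y ∈ B, Crosses x y)
    (hAC : ∀ x ∈ A, ∀ y ∈ C, Crosses x y) (hBC : ∀ x ∈ B, ∀ y ∈ C, Crosses x y) :
    4 * #(A ∪ B ∪ C) ≤ n * (n + 2) := by
  obtain ⟨a, ha⟩ := hA
  obtain ⟨b, hb⟩ := hB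
  obtain ⟨c, hc⟩ := hC
  have hA4 := four_mul_card_le_sq_card_endpoints fun x hx => hAB x hx b hb
  have hB4 := four_mul_card_le_sq_card_endpoints fun x hx => hBC x hx c hc
  have hC4 := four_mul_card_le_sq_card_endpoints fun x hx => (hAC a ha x hx).symm
  have hvertices : #(endpoints A) + #(endpoints B) + #(endpoints C) ≤ n + 3 := by
    rw [← card_union_of_disjoint (disjoint_endpoints hAB),
      ← card_union_of_disjoint (disjoint_union_left.2 ⟨disjoint_endpoints hAC,
        disjoint_endpoints hBC⟩), ← endpoints_union, ← endpoints_union]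
    simpa using card_le_card (endpoints_subset_Icc hdiag)
  have hsq := sq_add_sq_add_sq_le (two_le_card_endpoints ha (hAB a ha b hb).fst_lt_snd)
    (two_le_card_endpoints hb (hBC b hb c hc).fst_lt_snd)
    (two_le_card_endpoints hc (hAC a ha c hc).symm.fst_lt_snd) hvertices
  have hcardAB := card_union_le A B
  have hcardABC := card_union_le (A ∪ B) C
  omega

theorem at_most_two_components_general (n : ℕ) (I : Finset (ℕ × ℕ))
    (hdiag : ∀ d ∈ I, IsDiag (n + 3) d) (hcard : 4 * I.card > n * (n + 2)) :
    ∀ a b c : {x // x ∈ I},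
      (ncGraph I).Reachable a b ∨ (ncGraph I).Reachable a c ∨
        (ncGraph I).Reachable b c := by
  intro a b c
  by_contra! h
  obtain ⟨hab, hac, hbc⟩ := h
  set A := ncComponent I a
  set B := ncComponent I b
  set C := I \ (A ∪ B)
  have hI : A ∪ B ∪ C = I :=
    union_sdiff_of_subset (union_subset (ncComponent_subset I a) (ncComponent_subset I b))
  have hCA : C ⊆ I \ A := sdiff_subset_sdiff subset_rfl subset_union_left
  have hCB : C ⊆ I \ B := sdiff_subset_sdiff subset_rfl subset_union_right
  have hcC : c.1 ∈ C := by
    simp only [C, mem_sdiff, mem_union, A, B, val_mem_ncComponent]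
    exact ⟨c.2, by tauto⟩
  have hbound := four_mul_card_le_of_pairwise_crossing (hI ▸ hdiag)
    ⟨a, val_mem_ncComponent.2 .rfl⟩ ⟨b, val_mem_ncComponent.2 .rfl⟩ ⟨c, hcC⟩
    (fun _ hx _ hy =>
      crosses_of_mem_ncComponent_of_mem_sdiff hx (ncComponent_subset_sdiff hab hy))
    (fun _ hx _ hy => crosses_of_mem_ncComponent_of_mem_sdiff hx (hCA hy))
    (fun _ hx _ hy => crosses_of_mem_ncComponent_of_mem_sdiff hx (hCB hy))
  rw [hI] at hbound
  omega

/-- Lemma 2.20: if `I` is a set of diagonals of the `(n+3)`-gon with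
`4·|I| > n(n+2)`, then the non-crossing graph `G(I)` has at most two connected
components (among any three diagonals of `I`, two are joined by a path). -/
theorem at_most_two_components (n : ℕ) (hn : 3 ≤ n) (I : Finset (ℕ × ℕ))
    (hdiag : ∀ d ∈ I, IsDiag (n + 3) d) (hcard : 4 * I.card > n * (n + 2)) :
    ∀ a b c : {x // x ∈ I},
      (ncGraph I).Reachable a b ∨ (ncGraph I).Reachable a c ∨
        (ncGraph I).Reachable b c :=
  at_most_two_components_general n I hdiag hcard
end

section
/- Let n ≥ 3 and let I be a finite set of diagonals of the convex (n+3)-gon G_{n+3} such that the non-crossing graph G(I) has exactly two connected components and |I| = q(n)+1. Then there is a maximal diagonal d of G_{n+3} such that I = {d} ∪ {e : e is a diagonal of G_{n+3} crossing d}; moreover {d} is one connected component of G(I) and the set of diagonals crossing d is the other. -/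
/-- The length of a diagonal of the convex `N`-gon: the smaller of the two numbers of
vertices lying strictly on either side of it. -/
def DiagLen (N : ℕ) (d : ℕ × ℕ) : ℕ :=
  min (d.2 - d.1 - 1) (N - 1 - (d.2 - d.1))

/-- `q(n) = n(n+2)/4` for even `n` and `q(n) = (n+1)²/4` for odd `n`. -/
def q (n : ℕ) : ℕ := if Even n then n * (n + 2) / 4 else (n + 1) ^ 2 / 4

/-!
If one component of `G(I)` is a single diagonal `d`, the other consists of diagonals crossing `d`,
of which there are `a * b`, where `a + b = n + 1` count the vertices on the two sides of `d`. As
`4ab ≤ (a + b)²`, the count `q(n)` forces the component to be all of them and `|a - b| ≤ 1`.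

If both components have at least two elements, every diagonal of one crosses every diagonal of the
other. For one of them, `Y`, all left endpoints precede all right endpoints; connectedness of `Y`
then confines the endpoints of `Y` to two intervals and those of the other component to the two
complementary arcs, one endpoint in each. With arcs of `c₁, c₂, b₁, b₂` vertices this gives
`4|I| ≤ 4(c₁c₂ + b₁b₂) ≤ s² + t² ≤ (s + t - 2)² + 2 = (n + 1)² + 2 < 4(q(n) + 1)`, where
`s = c₁ + c₂ ≥ 3` and `t = b₁ + b₂ ≥ 3`.
-/

open Finset

lemma mem_Diags {N : ℕ} {e : ℕ × ℕ} : e ∈ Diags N ↔ IsDiag N e := by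
  simp only [Diags, IsDiag, mem_filter, mem_product, mem_range]
  omega

lemma crosses_comm {d e : ℕ × ℕ} : Crosses d e ↔ Crosses e d := Or.comm

lemma sq_succ_eq_four_mul_q_add (n : ℕ) : (n + 1) ^ 2 = 4 * q n + (n + 1) % 2 := by
  unfold q
  split_ifs with h
  · obtain ⟨k, rfl⟩ := h
    rw [show (k + k) * (k + k + 2) = 4 * (k * (k + 1)) by ring, Nat.mul_div_cancel_left _ four_pos]
    ring_nf
    omega
  · obtain ⟨k, rfl⟩ := Nat.not_even_iff_odd.mp h
    rw [show (2 * k + 1 + 1) ^ 2 = 4 * (k + 1) ^ 2 by ring, Nat.mul_div_cancel_left _ four_pos]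
    omega

lemma min_eq_add_div_two_of_sq_le {a b : ℕ} (h : (a + b) ^ 2 ≤ 4 * (a * b) + 1) :
    min a b = (a + b) / 2 := by
  rcases le_total a b with hab | hab
  · obtain ⟨e, rfl⟩ := Nat.exists_eq_add_of_le hab
    have : e ≤ 1 := by nlinarith
    omega
  · obtain ⟨e, rfl⟩ := Nat.exists_eq_add_of_le hab
    have : e ≤ 1 := by nlinarith
    omega

lemma three_le_add_of_two_le_mul {a b : ℕ} (h : 2 ≤ a * b) : 3 ≤ a + b := by
  by_contra! hab
  have ha : a ≤ 2 := by omega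
  have hb : b ≤ 2 := by omega
  interval_cases a <;> interval_cases b <;> omega

lemma four_mul_add_mul_le {c₁ c₂ b₁ b₂ : ℕ} (hc : 2 ≤ c₁ * c₂) (hb : 2 ≤ b₁ * b₂) :
    4 * (c₁ * c₂ + b₁ * b₂) ≤ (c₁ + c₂ + b₁ + b₂ - 2) ^ 2 + 2 := by
  obtain ⟨s, hs⟩ := Nat.exists_eq_add_of_le (three_le_add_of_two_le_mul hc)
  obtain ⟨t, ht⟩ := Nat.exists_eq_add_of_le (three_le_add_of_two_le_mul hb)
  have hsum : c₁ + c₂ + b₁ + b₂ - 2 = s + t + 4 := by omega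
  rw [hsum]
  nlinarith [four_mul_le_sq_add c₁ c₂, four_mul_le_sq_add b₁ b₂]

lemma card_filter_crosses_le {N : ℕ} {d : ℕ × ℕ} (hd : IsDiag N d) :
    #((Diags N).filter (fun e => Crosses d e)) ≤ (d.2 - d.1 - 1) * (N - 1 - (d.2 - d.1)) := by
  obtain ⟨i, j⟩ := d
  have hsub : (Diags N).filter (fun e => Crosses (i, j) e) ⊆
      (Ioo i j ×ˢ Ioc j N) ∪ (Ioo 0 i ×ˢ Ioo i j) := by
    intro e he
    rw [mem_filter, mem_Diags] at he
    simp only [mem_union, mem_product, mem_Ioo, mem_Ioc]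
    unfold IsDiag Crosses at he
    omega
  calc _ ≤ _ := card_le_card hsub
    _ ≤ _ := card_union_le _ _
    _ = (j - i - 1) * (N - j) + (i - 1) * (j - i - 1) := by
      simp only [card_product, Nat.card_Ioo, Nat.card_Ioc, Nat.sub_zero]
    _ = _ := by
      rw [mul_comm (i - 1), ← mul_add]
      unfold IsDiag at hd
      congr 1
      omega

/-- Connectedness of the non-crossing graph `G(Y)`, phrased as an induction principle. -/
def NoncrossingConnected (Y : Finset (ℕ × ℕ)) : Prop :=
  ∀ P : ℕ × ℕ → Prop, (∀ y ∈ Y, ∀ y' ∈ Y, ¬Crosses y y' → P y → P y') →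
    ∀ y ∈ Y, ∀ y' ∈ Y, P y → P y'

namespace TwoComponents

variable {I I₁ I₂ : Finset (ℕ × ℕ)}

lemma symm (h : TwoComponents I I₁ I₂) : TwoComponents I I₂ I₁ := by
  obtain ⟨hun, hdisj, hne₁, hne₂, hreach⟩ := h
  refine ⟨union_comm I₁ I₂ ▸ hun, hdisj.symm, hne₂, hne₁, fun d hd e he => ?_⟩
  rw [hreach d hd e he, or_comm]

lemma card_add_card (h : TwoComponents I I₁ I₂) : #I₁ + #I₂ = #I := by
  rw [← card_union_of_disjoint h.2.1, h.1]

lemma mem_left (h : TwoComponents I I₁ I₂) {d : ℕ × ℕ} (hd : d ∈ I₁) : d ∈ I :=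
  h.1 ▸ mem_union_left _ hd

lemma mem_right (h : TwoComponents I I₁ I₂) {d : ℕ × ℕ} (hd : d ∈ I₂) : d ∈ I :=
  h.1 ▸ mem_union_right _ hd

lemma crosses (h : TwoComponents I I₁ I₂) {d e : ℕ × ℕ} (hd : d ∈ I₁) (he : e ∈ I₂) :
    Crosses d e := by
  by_contra hde
  have hne : d ≠ e := fun hde => disjoint_left.mp h.2.1 hd (hde ▸ he)
  have hadj : (ncGraph I).Adj ⟨d, h.mem_left hd⟩ ⟨e, h.mem_right he⟩ :=
    ⟨fun hde => hne (congrArg Subtype.val hde), hde⟩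
  rcases (h.2.2.2.2 _ _ _ _).mp hadj.reachable with ⟨-, he₁⟩ | ⟨hd₂, -⟩
  · exact disjoint_left.mp h.2.1 he₁ he
  · exact disjoint_left.mp h.2.1 hd hd₂

lemma noncrossingConnected_right (h : TwoComponents I I₁ I₂) : NoncrossingConnected I₂ := by
  intro P hstep y hy y' hy' hPy
  have hreach := (h.2.2.2.2 y (h.mem_right hy) y' (h.mem_right hy')).mpr (Or.inr ⟨hy, hy'⟩)
  rw [SimpleGraph.reachable_iff_reflTransGen] at hreach
  -- a neighbour of a diagonal of `I₂` does not cross it, so it is not in `I₁`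
  suffices ∀ z : {x // x ∈ I}, Relation.ReflTransGen (ncGraph I).Adj ⟨y, h.mem_right hy⟩ z →
      z.1 ∈ I₂ ∧ P z.1 from (this _ hreach).2
  intro z hz
  induction hz with
  | refl => exact ⟨hy, hPy⟩
  | tail _ hadj ih =>
    rename_i u v _
    have hv : v.1 ∈ I₂ := by
      rcases mem_union.mp (h.1 ▸ v.2 : v.1 ∈ I₁ ∪ I₂) with hv | hv
      · exact absurd (crosses_comm.mp (h.crosses hv ih.1)) hadj.2
      · exact hv
    exact ⟨hv, hstep u.1 ih.1 v.1 hv hadj.2 ih.2⟩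

lemma noncrossingConnected_left (h : TwoComponents I I₁ I₂) : NoncrossingConnected I₁ :=
  h.symm.noncrossingConnected_right

end TwoComponents

/-- If `Y` contains chords `(a', b')` and `(a, b)` with `b' ≤ a`, every chord of `X` runs from
`(a', b')` to `(a, b)`. -/
lemma forall_lt_or_forall_lt_of_forall_crosses {X Y : Finset (ℕ × ℕ)}
    (hXY : ∀ x ∈ X, ∀ y ∈ Y, Crosses x y) :
    (∀ y ∈ Y, ∀ y' ∈ Y, y.1 < y'.2) ∨ (∀ x ∈ X, ∀ x' ∈ X, x.1 < x'.2) := by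
  by_contra! ⟨⟨y, hy, y', hy', hyy'⟩, x, hx, x', hx', hxx'⟩
  have := hXY x hx y hy
  have := hXY x hx y' hy'
  have := hXY x' hx' y hy
  have := hXY x' hx' y' hy'
  unfold Crosses at *
  omega

lemma forall_crosses_same_side {X Y : Finset (ℕ × ℕ)} (hYconn : NoncrossingConnected Y)
    (hYsep : ∀ y ∈ Y, ∀ y' ∈ Y, y.1 < y'.2) (hXY : ∀ x ∈ X, ∀ y ∈ Y, Crosses x y)
    {x : ℕ × ℕ} (hx : x ∈ X) :
    (∀ y ∈ Y, x.1 < y.1 ∧ y.1 < x.2 ∧ x.2 < y.2) ∨ (∀ y ∈ Y, y.1 < x.1 ∧ x.1 < y.2 ∧ y.2 < x.2) := by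
  -- otherwise `x` would force `y'` to cross `y`
  have hstep : ∀ y ∈ Y, ∀ y' ∈ Y, ¬Crosses y y' → x.1 < y.1 → x.1 < y'.1 := by
    intro y hy y' hy' hyy' hxy
    have := hXY x hx y hy
    have := hXY x hx y' hy'
    have := hYsep y hy y' hy'
    unfold Crosses at *
    omega
  by_cases hleft : ∃ y ∈ Y, x.1 < y.1
  · obtain ⟨y₀, hy₀, hxy₀⟩ := hleft
    left
    intro y hy
    have := hYconn _ hstep y₀ hy₀ y hy hxy₀
    have := hXY x hx y hy
    unfold Crosses at *
    omega
  · push Not at hleft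
    right
    intro y hy
    have := hleft y hy
    have := hXY x hx y hy
    unfold Crosses at *
    omega

lemma four_mul_card_add_card_le_of_sep {N : ℕ} {X Y : Finset (ℕ × ℕ)}
    (hX : ∀ x ∈ X, 1 ≤ x.1 ∧ x.2 ≤ N) (hY : ∀ y ∈ Y, 1 ≤ y.1 ∧ y.2 ≤ N)
    (hXY : ∀ x ∈ X, ∀ y ∈ Y, Crosses x y) (hYconn : NoncrossingConnected Y)
    (hYsep : ∀ y ∈ Y, ∀ y' ∈ Y, y.1 < y'.2) (hX2 : 2 ≤ #X) (hY2 : 2 ≤ #Y) :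
    4 * (#X + #Y) ≤ (N - 2) ^ 2 + 2 := by
  have hYne : Y.Nonempty := card_pos.mp (by omega)
  obtain ⟨ya, hya, hamin⟩ := exists_min_image Y Prod.fst hYne
  obtain ⟨yb, hyb, hamax⟩ := exists_max_image Y Prod.fst hYne
  obtain ⟨yc, hyc, hbmin⟩ := exists_min_image Y Prod.snd hYne
  obtain ⟨yd, hyd, hbmax⟩ := exists_max_image Y Prod.snd hYne
  have hXsub : X ⊆ (Ico 1 ya.1 ×ˢ Ioo yb.1 yc.2) ∪ (Ioo yb.1 yc.2 ×ˢ Ioc yd.2 N) := by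
    intro x hx
    have := hX x hx
    simp only [mem_union, mem_product, mem_Ico, mem_Ioo, mem_Ioc]
    rcases forall_crosses_same_side hYconn hYsep hXY hx with hside | hside
    · have := hside ya hya
      have := hside yb hyb
      have := hside yc hyc
      omega
    · have := hside yb hyb
      have := hside yc hyc
      have := hside yd hyd
      omega
  have hYsub : Y ⊆ Icc ya.1 yb.1 ×ˢ Icc yc.2 yd.2 := fun y hy =>
    mem_product.mpr ⟨mem_Icc.mpr ⟨hamin y hy, hamax y hy⟩, mem_Icc.mpr ⟨hbmin y hy, hbmax y hy⟩⟩
  have hXcard : #X ≤ (yc.2 - yb.1 - 1) * ((ya.1 - 1) + (N - yd.2)) := by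
    calc #X ≤ _ := card_le_card hXsub
      _ ≤ _ := card_union_le _ _
      _ = _ := by
        simp only [card_product, Nat.card_Ico, Nat.card_Ioo, Nat.card_Ioc]
        ring
  have hYcard : #Y ≤ (yb.1 + 1 - ya.1) * (yd.2 + 1 - yc.2) := by
    simpa only [card_product, Nat.card_Icc] using card_le_card hYsub
  have hsum : (yc.2 - yb.1 - 1) + ((ya.1 - 1) + (N - yd.2)) + (yb.1 + 1 - ya.1) +
      (yd.2 + 1 - yc.2) = N := by
    have := hY ya hya
    have := hY yd hyd
    have := hamax ya hya
    have := hbmax yc hyc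
    have := hYsep yb hyb yc hyc
    omega
  have hbound := four_mul_add_mul_le (hX2.trans hXcard) (hY2.trans hYcard)
  rw [hsum] at hbound
  omega

lemma four_mul_card_add_card_le {N : ℕ} {X Y : Finset (ℕ × ℕ)}
    (hX : ∀ x ∈ X, 1 ≤ x.1 ∧ x.2 ≤ N) (hY : ∀ y ∈ Y, 1 ≤ y.1 ∧ y.2 ≤ N)
    (hXY : ∀ x ∈ X, ∀ y ∈ Y, Crosses x y)
    (hXconn : NoncrossingConnected X) (hYconn : NoncrossingConnected Y)
    (hX2 : 2 ≤ #X) (hY2 : 2 ≤ #Y) :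
    4 * (#X + #Y) ≤ (N - 2) ^ 2 + 2 := by
  rcases forall_lt_or_forall_lt_of_forall_crosses hXY with hsep | hsep
  · exact four_mul_card_add_card_le_of_sep hX hY hXY hYconn hsep hX2 hY2
  · rw [add_comm]
    exact four_mul_card_add_card_le_of_sep hY hX (fun y hy x hx => crosses_comm.mp (hXY x hx y hy))
      hXconn hsep hY2 hX2

lemma TwoComponents.eq_filter_crosses_of_singleton {n : ℕ} {I J : Finset (ℕ × ℕ)}
    {d : ℕ × ℕ} (hdiag : ∀ d ∈ I, IsDiag (n + 3) d) (h : TwoComponents I {d} J)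
    (hI : #I = q n + 1) :
    J = (Diags (n + 3)).filter (fun e => Crosses d e) ∧ DiagLen (n + 3) d = (n + 1) / 2 := by
  have hd : IsDiag (n + 3) d := hdiag d (h.mem_left (mem_singleton_self d))
  have hJsub : J ⊆ (Diags (n + 3)).filter (fun e => Crosses d e) := fun e he =>
    mem_filter.mpr ⟨mem_Diags.mpr (hdiag e (h.mem_right he)), h.crosses (mem_singleton_self d) he⟩
  have hJcard : #J = q n := by
    have := h.card_add_card
    rw [card_singleton] at this
    omega
  have hcard := card_filter_crosses_le hd
  set a := d.2 - d.1 - 1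
  set b := n + 3 - 1 - (d.2 - d.1)
  have hab : a + b = n + 1 := by
    unfold IsDiag at hd
    omega
  have hq := sq_succ_eq_four_mul_q_add n
  have hamgm := four_mul_le_sq_add a b
  rw [hab, mul_assoc] at hamgm
  have hJ : J = (Diags (n + 3)).filter (fun e => Crosses d e) :=
    eq_of_subset_of_card_le hJsub (by rw [hJcard]; omega)
  refine ⟨hJ, ?_⟩
  change min a b = _
  rw [← hab]
  apply min_eq_add_div_two_of_sq_le
  have := card_le_card hJsub
  rw [hab]
  omega

lemma TwoComponents.card_left_eq_one_or_card_right_eq_one {n : ℕ} {I I₁ I₂ : Finset (ℕ × ℕ)}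
    (hdiag : ∀ d ∈ I, IsDiag (n + 3) d) (h : TwoComponents I I₁ I₂) (hI : q n < #I) :
    #I₁ = 1 ∨ #I₂ = 1 := by
  by_contra! h₁₂
  have hendpoints : ∀ e ∈ I, 1 ≤ e.1 ∧ e.2 ≤ n + 3 := fun e he => by
    have := hdiag e he
    unfold IsDiag at this
    omega
  have hbound := four_mul_card_add_card_le (fun e he => hendpoints e (h.mem_left he))
    (fun e he => hendpoints e (h.mem_right he)) (fun _ hx _ hy => h.crosses hx hy)
    h.noncrossingConnected_left h.noncrossingConnected_right
    (by have := card_pos.mpr h.2.2.1; omega) (by have := card_pos.mpr h.2.2.2.1; omega)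
  have hq := sq_succ_eq_four_mul_q_add n
  rw [h.card_add_card, show n + 3 - 2 = n + 1 by omega] at hbound
  omega

theorem structure_of_extremal_sets_general (n : ℕ) (I : Finset (ℕ × ℕ))
    (hdiag : ∀ d ∈ I, IsDiag (n + 3) d)
    (h2 : ∃ I₁ I₂ : Finset (ℕ × ℕ), TwoComponents I I₁ I₂)
    (hI : I.card = q n + 1) :
    ∃ d : ℕ × ℕ, IsDiag (n + 3) d ∧ DiagLen (n + 3) d = (n + 1) / 2 ∧
      I = insert d ((Diags (n + 3)).filter (fun e => Crosses d e)) ∧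
      TwoComponents I {d} ((Diags (n + 3)).filter (fun e => Crosses d e)) := by
  obtain ⟨d, J, h⟩ : ∃ d J, TwoComponents I {d} J := by
    obtain ⟨I₁, I₂, h⟩ := h2
    rcases h.card_left_eq_one_or_card_right_eq_one hdiag (by omega) with h₁ | h₂
    · obtain ⟨d, rfl⟩ := card_eq_one.mp h₁
      exact ⟨d, I₂, h⟩
    · obtain ⟨d, rfl⟩ := card_eq_one.mp h₂
      exact ⟨d, I₁, h.symm⟩
  obtain ⟨rfl, hlen⟩ := h.eq_filter_crosses_of_singleton hdiag hI
  exact ⟨d, hdiag d (h.mem_left (mem_singleton_self d)), hlen, h.1.symm, h⟩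

/-- Lemma 2.23: if `G(I)` has exactly two connected components and `|I| = q(n)+1`,
then `I` consists of a maximal diagonal `d` together with all diagonals crossing `d`;
moreover `{d}` is one component and the set of diagonals crossing `d` is the other. -/
theorem structure_of_extremal_sets (n : ℕ) (hn : 3 ≤ n) (I : Finset (ℕ × ℕ))
    (hdiag : ∀ d ∈ I, IsDiag (n + 3) d)
    (h2 : ∃ I₁ I₂ : Finset (ℕ × ℕ), TwoComponents I I₁ I₂)
    (hI : I.card = q n + 1) :
    ∃ d : ℕ × ℕ, IsDiag (n + 3) d ∧ DiagLen (n + 3) d = (n + 1) / 2 ∧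
      I = insert d ((Diags (n + 3)).filter (fun e => Crosses d e)) ∧
      TwoComponents I {d} ((Diags (n + 3)).filter (fun e => Crosses d e)) :=
  structure_of_extremal_sets_general n I hdiag h2 hI
end
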